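/- Let F be a convex class of probability measures on Ω and let T : F → A ⊆ ℝ^k be mixture-continuous and surjective onto A. If S : A × Ω → ℝ is strictly F-consistent for T, then for all F ∈ F the expected score S̄(·,F) : A → ℝ has exactly one local minimum, which is at x = T(F). -/

import Mathlib

/-!
Let `x ∈ A` be a local minimum of `S̄(·, F)` with `x ≠ T F`, and pick `G` with `T G = x`.
Along the mixtures `H_λ = (1 - λ) F + λ G`, strict consistency at `H_λ` and consistency at `G`
give `S̄(T H_λ, F) < S̄(x, F)` whenever `λ < 1` and `T H_λ ≠ x`, because `S̄(z, H_λ)` is affine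
in `λ`. Let `c` be the first parameter with `T H_c = x`; by mixture-continuity `T H_λ → x`
as `λ ↑ c`, so there are points of `A` arbitrarily close to `x` with strictly smaller expected
score, contradicting local minimality.
-/

open MeasureTheory ENNReal

noncomputable def escore {α Ω : Type*} [MeasurableSpace Ω]
    (S : α → Ω → ℝ) (x : α) (F : Measure Ω) : ℝ :=
  ∫ y, S x y ∂F

/-- The mixture `(1 - lam) • F + lam • G` of two measures. -/
noncomputable def mix {Ω : Type*} [MeasurableSpace Ω]
    (F G : Measure Ω) (lam : ℝ) : Measure Ω :=
  ENNReal.ofReal (1 - lam) • F + ENNReal.ofReal lam • G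

/-- The class `𝓕` is convex (closed under mixtures). -/
def MixConvex {Ω : Type*} [MeasurableSpace Ω] (𝓕 : Set (Measure Ω)) : Prop :=
  ∀ F ∈ 𝓕, ∀ G ∈ 𝓕, ∀ lam ∈ Set.Icc (0:ℝ) 1, mix F G lam ∈ 𝓕

/-- `S` is an `𝓕`-consistent scoring function for `T` on the action domain `A`. -/
def Consistent {α Ω : Type*} [MeasurableSpace Ω]
    (𝓕 : Set (Measure Ω)) (A : Set α) (T : Measure Ω → α) (S : α → Ω → ℝ) : Prop :=
  ∀ F ∈ 𝓕, ∀ x ∈ A, escore S (T F) F ≤ escore S x F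

/-- `S` is a strictly `𝓕`-consistent scoring function for `T` on the action domain `A`. -/
def StrictlyConsistent {α Ω : Type*} [MeasurableSpace Ω]
    (𝓕 : Set (Measure Ω)) (A : Set α) (T : Measure Ω → α) (S : α → Ω → ℝ) : Prop :=
  Consistent 𝓕 A T S ∧
    ∀ F ∈ 𝓕, ∀ x ∈ A, escore S x F = escore S (T F) F → x = T F

/-- `T` is mixture-continuous: `fun lam => T ((1-lam) • F + lam • G)` is continuous on `[0,1]`. -/
def MixContinuous {Ω : Type*} [MeasurableSpace Ω] {k : ℕ}
    (𝓕 : Set (Measure Ω)) (T : Measure Ω → (Fin k → ℝ)) : Prop :=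
  ∀ F ∈ 𝓕, ∀ G ∈ 𝓕, ContinuousOn (fun lam => T (mix F G lam)) (Set.Icc (0:ℝ) 1)

open Set Filter Topology

section Mixtures

variable {Ω : Type*} [MeasurableSpace Ω]

@[simp]
lemma mix_zero (F G : Measure Ω) : mix F G 0 = F := by
  simp [mix]

@[simp]
lemma mix_one (F G : Measure Ω) : mix F G 1 = G := by
  simp [mix]

lemma escore_mix {α : Type*} (S : α → Ω → ℝ) (z : α) {F G : Measure Ω} {lam : ℝ}
    (hlam : lam ∈ Icc (0 : ℝ) 1) (hF : Integrable (S z) F) (hG : Integrable (S z) G) :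
    escore S z (mix F G lam) = (1 - lam) * escore S z F + lam * escore S z G := by
  unfold escore mix
  rw [integral_add_measure (hF.smul_measure ofReal_ne_top) (hG.smul_measure ofReal_ne_top),
    integral_smul_measure, integral_smul_measure, toReal_ofReal hlam.1,
    toReal_ofReal (sub_nonneg.2 hlam.2), smul_eq_mul, smul_eq_mul]

lemma StrictlyConsistent.escore_lt_of_mix {α : Type*} {𝓕 : Set (Measure Ω)} {A : Set α}
    {T : Measure Ω → α} {S : α → Ω → ℝ} (hS : StrictlyConsistent 𝓕 A T S)
    (hSint : ∀ z ∈ A, ∀ H ∈ 𝓕, Integrable (S z) H) {F G : Measure Ω} (hF : F ∈ 𝓕)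
    (hG : G ∈ 𝓕) (hTG : T G ∈ A) {lam : ℝ} (hlam : lam ∈ Ico (0 : ℝ) 1)
    (hH : mix F G lam ∈ 𝓕) (hTH : T (mix F G lam) ∈ A) (hne : T (mix F G lam) ≠ T G) :
    escore S (T (mix F G lam)) F < escore S (T G) F := by
  set H := mix F G lam
  have hlam' : lam ∈ Icc (0 : ℝ) 1 := Ico_subset_Icc_self hlam
  have hstrict : escore S (T H) H < escore S (T G) H :=
    (hS.1 H hH _ hTG).lt_of_ne fun h => hne (hS.2 H hH _ hTG h.symm).symm
  have hcons : escore S (T G) G ≤ escore S (T H) G := hS.1 G hG _ hTH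
  rw [escore_mix S _ hlam' (hSint _ hTH F hF) (hSint _ hTH G hG),
    escore_mix S _ hlam' (hSint _ hTG F hF) (hSint _ hTG G hG)] at hstrict
  -- `(1 - lam) * (S̄(T H, F) - S̄(T G, F)) < lam * (S̄(T G, G) - S̄(T H, G)) ≤ 0` and `lam < 1`
  nlinarith [hlam.1, hlam.2]

end Mixtures

lemma ContinuousOn.exists_tendsto_nhdsLT_of_first_hit {X : Type*} [TopologicalSpace X]
    [T1Space X] {p : ℝ → X} {x : X} (hp : ContinuousOn p (Icc 0 1)) (h0 : p 0 ≠ x)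
    (h1 : p 1 = x) :
    ∃ c : ℝ, Tendsto p (𝓝[<] c) (𝓝 x) ∧ ∀ᶠ t in 𝓝[<] c, t ∈ Ico (0 : ℝ) 1 ∧ p t ≠ x := by
  have hclosed : IsClosed (Icc (0 : ℝ) 1 ∩ p ⁻¹' {x}) :=
    hp.preimage_isClosed_of_isClosed isClosed_Icc isClosed_singleton
  have hne : (Icc (0 : ℝ) 1 ∩ p ⁻¹' {x}).Nonempty := ⟨1, right_mem_Icc.2 zero_le_one, h1⟩
  obtain ⟨c, ⟨hcI, hcx⟩, hleast⟩ :=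
    (isCompact_Icc.of_isClosed_subset hclosed inter_subset_left).exists_isLeast hne
  have hc0 : 0 < c := hcI.1.lt_of_ne fun h => h0 (h ▸ hcx)
  have hIco : Ico 0 c ∈ 𝓝[<] c := Ico_mem_nhdsLT hc0
  refine ⟨c, ?_, eventually_of_mem hIco fun t ht => ⟨⟨ht.1, ht.2.trans_le hcI.2⟩, fun hpt => ?_⟩⟩
  · rw [← mem_singleton_iff.1 hcx]
    exact (hp c hcI).mono_of_mem_nhdsWithin
      (mem_of_superset hIco fun t ht => ⟨ht.1, ht.2.le.trans hcI.2⟩)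
  · exact ht.2.not_ge (hleast ⟨⟨ht.1, ht.2.le.trans hcI.2⟩, hpt⟩)

theorem statement3_general {Ω : Type*} [MeasurableSpace Ω] {k : ℕ}
    (𝓕 : Set (Measure Ω))
    (hconv : MixConvex 𝓕)
    (A : Set (Fin k → ℝ)) (T : Measure Ω → (Fin k → ℝ))
    (hTA : ∀ F ∈ 𝓕, T F ∈ A)
    (hmix : MixContinuous 𝓕 T)
    (hsurj : ∀ x ∈ A, ∃ F ∈ 𝓕, T F = x)
    (S : (Fin k → ℝ) → Ω → ℝ)
    (hSint : ∀ x ∈ A, ∀ F ∈ 𝓕, Integrable (S x) F)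
    (hS : StrictlyConsistent 𝓕 A T S) :
    ∀ F ∈ 𝓕,
      IsLocalMinOn (fun z => escore S z F) A (T F) ∧
      ∀ x ∈ A, IsLocalMinOn (fun z => escore S z F) A x → x = T F := by
  intro F hF
  refine ⟨IsMinOn.localize fun z hz => hS.1 F hF z hz, fun x hx hloc => ?_⟩
  by_contra hne
  obtain ⟨G, hG, rfl⟩ := hsurj x hx
  obtain ⟨c, htendsto, hpath⟩ := (hmix F hF G hG).exists_tendsto_nhdsLT_of_first_hit
    (by simpa using Ne.symm hne) (by simp)
  have hmem : ∀ᶠ t in 𝓝[<] c, mix F G t ∈ 𝓕 :=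
    hpath.mono fun t ht => hconv F hF G hG t (Ico_subset_Icc_self ht.1)
  have hge : ∀ᶠ t in 𝓝[<] c, escore S (T G) F ≤ escore S (T (mix F G t)) F :=
    (tendsto_nhdsWithin_iff.2 ⟨htendsto, hmem.mono fun t ht => hTA _ ht⟩).eventually hloc
  have hlt : ∀ᶠ t in 𝓝[<] c, escore S (T (mix F G t)) F < escore S (T G) F :=
    (hpath.and hmem).mono fun t ht =>
      hS.escore_lt_of_mix hSint hF hG hx ht.1.1 ht.2 (hTA _ ht.2) ht.1.2
  obtain ⟨t, hge_t, hlt_t⟩ := (hge.and hlt).exists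
  exact hge_t.not_gt hlt_t

/-- For a strictly `𝓕`-consistent scoring function `S` of a
mixture-continuous surjective functional `T`, the expected score `S̄(·,F)` on `A` has
exactly one local minimum, namely at `x = T F`. -/
theorem statement3 {Ω : Type*} [MeasurableSpace Ω] {k : ℕ}
    (𝓕 : Set (Measure Ω)) (hprob : ∀ F ∈ 𝓕, IsProbabilityMeasure F)
    (hconv : MixConvex 𝓕)
    (A : Set (Fin k → ℝ)) (T : Measure Ω → (Fin k → ℝ))
    (hTA : ∀ F ∈ 𝓕, T F ∈ A)
    (hmix : MixContinuous 𝓕 T)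
    (hsurj : ∀ x ∈ A, ∃ F ∈ 𝓕, T F = x)
    (S : (Fin k → ℝ) → Ω → ℝ)
    (hSint : ∀ x ∈ A, ∀ F ∈ 𝓕, Integrable (S x) F)
    (hS : StrictlyConsistent 𝓕 A T S) :
    ∀ F ∈ 𝓕,
      IsLocalMinOn (fun z => escore S z F) A (T F) ∧
      ∀ x ∈ A, IsLocalMinOn (fun z => escore S z F) A x → x = T F :=
  statement3_general 𝓕 hconv A T hTA hmix hsurj S hSint hS
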